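/- arXiv:0902.4789 — 3 statements merged into one kernel-verified Lean document; each statement's English description precedes it below -/
import Mathlib

section
/- Let d ≥ 1, n ≥ 2. For every nonempty proper subset I of Fin n let U_I := {x : Fin n → E | ∀ i ∈ I, ∀ j ∉ I, x i ≠ x j}, where E = EuclideanSpace ℝ (Fin d). Then the union of the sets U_I over all nonempty proper subsets I of Fin n equals the complement of the thin diagonal: ⋃_{∅ ≠ I ⊊ Fin n} U_I = {x : Fin n → E | ¬(∀ i j, x i = x j)}. -/
/-- The sets `U_I`, for `I` a nonempty proper subset of `Fin n`, cover the
complement of the thin diagonal in `(ℝ^d)^n`. -/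
theorem euclidean_cover_of_complement_of_diagonal (d n : ℕ) (hd : 1 ≤ d) (hn : 2 ≤ n) :
    (⋃ I ∈ {I : Set (Fin n) | I.Nonempty ∧ I ≠ Set.univ},
      {x : Fin n → EuclideanSpace ℝ (Fin d) | ∀ i ∈ I, ∀ j ∉ I, x i ≠ x j})
      = {x : Fin n → EuclideanSpace ℝ (Fin d) | ¬ (∀ i j, x i = x j)} := by
  ext x
  simp only [Set.mem_iUnion, Set.mem_setOf_eq]
  constructor
  · rintro ⟨I, ⟨⟨i, hi⟩, hIu⟩, hx⟩ hall
    have hj : ∃ j, j ∉ I := by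
      by_contra h
      push_neg at h
      exact hIu (Set.eq_univ_of_forall h)
    obtain ⟨j, hj⟩ := hj
    exact hx i hi j hj (hall i j)
  · intro h
    push_neg at h
    obtain ⟨i, j, hij⟩ := h
    refine ⟨{k | x k = x i}, ⟨⟨i, rfl⟩, ?_⟩, ?_⟩
    · intro h
      exact hij ((Set.eq_univ_iff_forall.mp h j).symm ▸ rfl)
    · intro a ha b hb
      simp only [Set.mem_setOf_eq] at ha hb
      intro hab
      exact hb (hab ▸ ha)
end

section
/- Let σ be a finite type and P : σ → σ → ℝ with P i j = P j i for all i, j. On A = MvPolynomial σ ℝ let Γ be the linear operator Γ F = (1/2) Σ_{i,j ∈ σ} P i j • ∂ᵢ(∂ⱼ F), and on A ⊗[ℝ] A let Γ' be the linear operator Γ' = Σ_{i,j ∈ σ} P i j • (∂ᵢ ⊗ ∂ⱼ). Since Γ and Γ' strictly lower total degree, they are locally nilpotent and exp(Γ) = Σₙ Γⁿ/n!, exp(−Γ), and exp(Γ') are well-defined linear maps (all sums are finite on each element). Then for all F, G ∈ A: exp(Γ)( exp(−Γ)F · exp(−Γ)G ) = M( exp(Γ')(F ⊗ G) ), where M :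 A ⊗[ℝ] A → A is the multiplication map. Equivalently, exp(Γ)(exp(−Γ)F · exp(−Γ)G) = Σₙ (1/n!) Σ_{i,j : Fin n → σ} (∏_{k} P (i k) (j k)) • (∂_{i 0} ⋯ ∂_{i(n−1)} F) · (∂_{j 0} ⋯ ∂_{j(n−1)} G), the sums being finite. -/
open MvPolynomial TensorProduct

/-- The `i`-th partial derivative on `ℝ[σ]` as a linear endomorphism. -/
noncomputable def pderivL (σ : Type*) [Fintype σ] (i : σ) :
    Module.End ℝ (MvPolynomial σ ℝ) :=
  (pderiv i : Derivation ℝ (MvPolynomial σ ℝ) (MvPolynomial σ ℝ)).toLinearMap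

/-- The second-order operator `Γ F = (1/2) Σ_{i,j} P i j • ∂ᵢ(∂ⱼ F)` on the polynomial
algebra `ℝ[σ]`, a finite-dimensional model of the Euclidean time-ordering operator. -/
noncomputable def GammaOp (σ : Type*) [Fintype σ] (P : σ → σ → ℝ) :
    Module.End ℝ (MvPolynomial σ ℝ) :=
  (2 : ℝ)⁻¹ • ∑ i : σ, ∑ j : σ, P i j • (pderivL σ i ∘ₗ pderivL σ j)

/-- The operator `Γ' = Σ_{i,j} P i j • (∂ᵢ ⊗ ∂ⱼ)` on `ℝ[σ] ⊗ ℝ[σ]`. -/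
noncomputable def GammaOp' (σ : Type*) [Fintype σ] (P : σ → σ → ℝ) :
    Module.End ℝ (MvPolynomial σ ℝ ⊗[ℝ] MvPolynomial σ ℝ) :=
  ∑ i : σ, ∑ j : σ, P i j • TensorProduct.map (pderivL σ i) (pderivL σ j)

/-- The exponential `exp T = Σₙ Tⁿ/n!` of a degree-lowering operator `T`, applied to a
polynomial `F`.  Since `T` strictly lowers total degree, `Tⁿ F = 0` for
`n > totalDegree F`, so the series is in fact the finite sum below. -/
noncomputable def expApply {σ : Type*} [Fintype σ]
    (T : Module.End ℝ (MvPolynomial σ ℝ)) (F : MvPolynomial σ ℝ) : MvPolynomial σ ℝ :=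
  ∑ n ∈ Finset.range (F.totalDegree + 1), ((n.factorial : ℝ)⁻¹) • (T ^ n) F

/-! Expanding `∂ᵢ∂ⱼ(uv)` by the Leibniz rule and using the symmetry of `P` for the two cross terms
gives `Γ ∘ M = M ∘ (Γ' + Γ ⊗ 1 + 1 ⊗ Γ)` for the multiplication `M : A ⊗ A → A`, and the three
operators on `A ⊗ A` commute. Hence `exp Γ ∘ M = M ∘ exp Γ' ∘ (exp Γ ⊗ exp Γ)`, and applied to
`exp(−Γ)F ⊗ exp(−Γ)G` this is `M (exp Γ' (F ⊗ G))`. All operators involved strictly lower total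
degree, so every exponential is a finite sum: truncating all of them at
`N = totalDegree F + totalDegree G + 1` changes nothing, and for these truncations the usual
identities `exp (X + Y) = exp X ∘ exp Y` hold on the vectors at hand. -/

open Finset
open scoped Nat

section TruncExp

variable {𝕜 V W : Type*} [Field 𝕜] [AddCommGroup V] [Module 𝕜 V] [AddCommGroup W] [Module 𝕜 W]

noncomputable def truncExp (N : ℕ) (T : Module.End 𝕜 V) : Module.End 𝕜 V :=
  ∑ n ∈ range N, (n ! : 𝕜)⁻¹ • T ^ n

lemma truncExp_apply (N : ℕ) (T : Module.End 𝕜 V) (v : V) :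
    truncExp N T v = ∑ n ∈ range N, (n ! : 𝕜)⁻¹ • (T ^ n) v := by
  simp [truncExp]

lemma truncExp_apply_eq_of_le {T : Module.End 𝕜 V} {v : V} {M N : ℕ} (hv : (T ^ M) v = 0)
    (hMN : M ≤ N) : truncExp N T v = truncExp M T v := by
  rw [truncExp_apply, truncExp_apply]
  refine (sum_subset (range_subset_range.2 hMN) fun n _ hn => ?_).symm
  rw [Module.End.pow_map_zero_of_le (not_lt.1 (mem_range.not.1 hn)) hv, smul_zero]

lemma truncExp_comp {T : Module.End 𝕜 V} {S : Module.End 𝕜 W} {f : V →ₗ[𝕜] W}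
    (h : S ∘ₗ f = f ∘ₗ T) (N : ℕ) : truncExp N S ∘ₗ f = f ∘ₗ truncExp N T := by
  ext v
  simp only [LinearMap.comp_apply, truncExp_apply, map_sum, map_smul]
  refine sum_congr rfl fun n _ => ?_
  rw [← LinearMap.comp_apply (f := f), ← Module.End.commute_pow_left_of_commute h,
    LinearMap.comp_apply]

lemma truncExp_rTensor (N : ℕ) (f : Module.End 𝕜 V) :
    truncExp N (f.rTensor W) = (truncExp N f).rTensor W := by
  simp only [truncExp, LinearMap.rTensor_pow]
  simp only [← LinearMap.coe_rTensorHom, map_sum, map_smul]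

lemma truncExp_lTensor (N : ℕ) (f : Module.End 𝕜 V) :
    truncExp N (f.lTensor W) = (truncExp N f).lTensor W := by
  simp only [truncExp, LinearMap.lTensor_pow]
  simp only [← LinearMap.coe_lTensorHom, map_sum, map_smul]

variable [CharZero 𝕜]

lemma truncExp_add_apply {X Y : Module.End 𝕜 V} (hXY : Commute X Y) {N : ℕ} {v : V}
    (hv : ∀ k m, N ≤ k + m → (X ^ k) ((Y ^ m) v) = 0) :
    truncExp N (X + Y) v = truncExp N X (truncExp N Y v) := by
  set f : ℕ → ℕ → V := fun k m => ((k ! : 𝕜)⁻¹ * (m ! : 𝕜)⁻¹) • (X ^ k) ((Y ^ m) v)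
  have binomial (n : ℕ) :
      (n ! : 𝕜)⁻¹ • ((X + Y) ^ n) v = ∑ k ∈ range (n + 1), f k (n - k) := by
    rw [hXY.add_pow, LinearMap.sum_apply, smul_sum]
    refine sum_congr rfl fun k hk => ?_
    have hkn : k ≤ n := Nat.lt_succ_iff.1 (mem_range.1 hk)
    rw [Module.End.mul_apply, Module.End.mul_apply, Module.End.natCast_apply,
      ← Nat.cast_smul_eq_nsmul 𝕜, map_smul, map_smul, smul_smul, Nat.cast_choose 𝕜 hkn]
    congr 1
    have : (n ! : 𝕜) ≠ 0 := Nat.cast_ne_zero.2 n.factorial_ne_zero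
    field_simp
  calc truncExp N (X + Y) v = ∑ n ∈ range N, ∑ k ∈ range (n + 1), f k (n - k) := by
        simp only [truncExp_apply, binomial]
    _ = ∑ k ∈ range N, ∑ m ∈ range (N - k), f k m := sum_range_diag_flip N f
    -- `hv` kills the terms with `N ≤ k + m`, so the triangle `k + m < N` extends to the square
    _ = ∑ k ∈ range N, ∑ m ∈ range N, f k m :=
        sum_congr rfl fun k _ => sum_subset (range_subset_range.2 (Nat.sub_le N k))
          fun m _ hm => by simp [f, hv k m (by simp at hm; omega)]
    _ = truncExp N X (truncExp N Y v) := by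
        rw [truncExp_apply, truncExp_apply]
        simp only [map_sum, map_smul, smul_sum, smul_smul, f]

lemma truncExp_add_add_apply {X Y Z : Module.End 𝕜 V} (hXY : Commute X Y) (hXZ : Commute X Z)
    (hYZ : Commute Y Z) {N : ℕ} {v : V}
    (hv : ∀ a b c, N ≤ a + b + c → (X ^ a) ((Y ^ b) ((Z ^ c) v)) = 0) :
    truncExp N (X + (Y + Z)) v = truncExp N X (truncExp N Y (truncExp N Z v)) := by
  rw [truncExp_add_apply (hXY.add_right hXZ), truncExp_add_apply hYZ]
  · intro b c h
    simpa using hv 0 b c (by omega)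
  · intro a m h
    rw [hYZ.add_pow', LinearMap.sum_apply, map_sum]
    refine sum_eq_zero fun bc hbc => ?_
    rw [Finset.HasAntidiagonal.mem_antidiagonal] at hbc
    rw [LinearMap.smul_apply, map_nsmul, Module.End.mul_apply, hv a bc.1 bc.2 (by omega),
      smul_zero]

lemma truncExp_truncExp_neg_apply {T : Module.End 𝕜 V} {v : V} {M N : ℕ} (hv : (T ^ M) v = 0)
    (hMN : M ≤ N) : truncExp N T (truncExp M (-T) v) = v := by
  have hvN : (T ^ N) v = 0 := Module.End.pow_map_zero_of_le hMN hv
  have neg_pow_apply (m : ℕ) (w : V) : ((-T) ^ m) w = (-1 : 𝕜) ^ m • (T ^ m) w := by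
    rw [← neg_one_smul 𝕜 T, smul_pow, LinearMap.smul_apply]
  rw [← truncExp_apply_eq_of_le (by rw [neg_pow_apply, hv, smul_zero]) hMN,
    ← truncExp_add_apply (Commute.refl T).neg_right, add_neg_cancel, truncExp_apply]
  · rcases N.eq_zero_or_pos with rfl | hN
    · simpa using hvN.symm
    · rw [sum_eq_single_of_mem 0 (mem_range.2 hN) fun n _ hn => by simp [zero_pow hn]]
      simp
  · intro k m hkm
    rw [neg_pow_apply, map_smul, ← Module.End.mul_apply, ← pow_add,
      Module.End.pow_map_zero_of_le hkm hvN, smul_zero]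

end TruncExp

section DegreeLowering

variable (σ R : Type*) [CommSemiring R]

def degreeLowering : NonUnitalSubalgebra R (Module.End R (MvPolynomial σ R)) where
  carrier := {T | ∀ p, T p = 0 ∨ (T p).totalDegree < p.totalDegree}
  zero_mem' _ := Or.inl rfl
  add_mem' {T S} hT hS p := by
    rcases hT p with hTp | hTp
    · simpa [hTp] using hS p
    rcases hS p with hSp | hSp
    · simpa [hSp] using Or.inr hTp
    exact Or.inr ((totalDegree_add _ _).trans_lt (max_lt hTp hSp))
  mul_mem' {T S} hT hS p := by
    rcases hS p with hSp | hSp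
    · simp [hSp]
    rcases hT (S p) with hTp | hTp
    · exact Or.inl hTp
    · exact Or.inr (hTp.trans hSp)
  smul_mem' c T hT p := by
    rcases hT p with hTp | hTp
    · simp [hTp]
    · exact Or.inr ((totalDegree_smul_le c (T p)).trans_lt hTp)

variable {σ R}

lemma pow_apply_eq_zero_or_totalDegree_add_le {T : Module.End R (MvPolynomial σ R)}
    (hT : T ∈ degreeLowering σ R) (n : ℕ) (p : MvPolynomial σ R) :
    (T ^ n) p = 0 ∨ ((T ^ n) p).totalDegree + n ≤ p.totalDegree := by
  induction n with
  | zero => simp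
  | succ n ih =>
    rw [pow_succ', Module.End.mul_apply]
    rcases ih with h | h
    · simp [h]
    rcases hT ((T ^ n) p) with h' | h'
    · exact Or.inl h'
    · exact Or.inr (by omega)

lemma pow_apply_eq_zero_of_totalDegree_lt {T : Module.End R (MvPolynomial σ R)}
    (hT : T ∈ degreeLowering σ R) {n : ℕ} {p : MvPolynomial σ R} (h : p.totalDegree < n) :
    (T ^ n) p = 0 :=
  (pow_apply_eq_zero_or_totalDegree_add_le hT n p).resolve_right (by omega)

lemma totalDegree_pow_apply_le {T : Module.End R (MvPolynomial σ R)}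
    (hT : T ∈ degreeLowering σ R) (n : ℕ) (p : MvPolynomial σ R) :
    ((T ^ n) p).totalDegree ≤ p.totalDegree := by
  rcases pow_apply_eq_zero_or_totalDegree_add_le hT n p with h | h
  · simp [h]
  · omega

lemma totalDegree_pderiv_lt (i : σ) {p : MvPolynomial σ R} (h : pderiv i p ≠ 0) :
    (pderiv i p).totalDegree < p.totalDegree := by
  have hdeg : ∀ m ∈ (pderiv i p).support, (m.sum fun _ e => e) + 1 ≤ p.totalDegree := by
    intro m hm
    have hm' : m + Finsupp.single i 1 ∈ p.support := by
      rw [mem_support_iff, coeff_pderiv] at hm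
      exact mem_support_iff.2 (left_ne_zero_of_mul hm)
    simpa [Finsupp.sum_add_index'] using le_totalDegree hm'
  obtain ⟨m, hm⟩ := ne_zero_iff.1 h
  have hp : 1 ≤ p.totalDegree := (hdeg m (mem_support_iff.2 hm)).trans' (by omega)
  exact (Finset.sup_le fun m hm => Nat.le_sub_of_add_le (hdeg m hm)).trans_lt (by omega)

lemma pderiv_mem_degreeLowering (i : σ) :
    ((pderiv i : Derivation R (MvPolynomial σ R) (MvPolynomial σ R)) :
      Module.End R (MvPolynomial σ R)) ∈ degreeLowering σ R := fun p =>
  (eq_or_ne (pderiv i p) 0).imp id (totalDegree_pderiv_lt i)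

end DegreeLowering

lemma pderiv_pderiv_comm {σ R : Type*} [CommRing R] (i j : σ) (p : MvPolynomial σ R) :
    pderiv i (pderiv j p) = pderiv j (pderiv i p) := by
  have : ⁅pderiv i, pderiv j⁆ = (0 : Derivation R (MvPolynomial σ R) (MvPolynomial σ R)) :=
    derivation_ext fun k => by
      classical
      rw [Derivation.commutator_apply]
      simp [pderiv_X, Pi.single_apply, apply_ite]
  rw [← sub_eq_zero, ← Derivation.commutator_apply, this, Derivation.zero_apply]

lemma TensorProduct.commute_map {R M N : Type*} [CommSemiring R] [AddCommMonoid M] [Module R M]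
    [AddCommMonoid N] [Module R N] {f₁ f₂ : Module.End R M} {g₁ g₂ : Module.End R N}
    (hf : Commute f₁ f₂) (hg : Commute g₁ g₂) : Commute (map f₁ g₁) (map f₂ g₂) := by
  simp only [Commute, SemiconjBy, ← TensorProduct.map_mul, hf.eq, hg.eq]

lemma totalDegree_truncExp_apply_le {σ 𝕜 : Type*} [Field 𝕜] {T : Module.End 𝕜 (MvPolynomial σ 𝕜)}
    (hT : T ∈ degreeLowering σ 𝕜) (N : ℕ) (p : MvPolynomial σ 𝕜) :
    (truncExp N T p).totalDegree ≤ p.totalDegree := by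
  rw [truncExp_apply]
  exact totalDegree_finsetSum_le fun n _ =>
    (totalDegree_smul_le _ _).trans (totalDegree_pow_apply_le hT n p)

section Gamma

variable {σ : Type*} [Fintype σ] (P : σ → σ → ℝ)

lemma expApply_eq_truncExp_apply (T : Module.End ℝ (MvPolynomial σ ℝ)) (F : MvPolynomial σ ℝ) :
    expApply T F = truncExp (F.totalDegree + 1) T F :=
  (truncExp_apply _ _ _).symm

lemma totalDegree_expApply_le {T : Module.End ℝ (MvPolynomial σ ℝ)}
    (hT : T ∈ degreeLowering σ ℝ) (F : MvPolynomial σ ℝ) :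
    (expApply T F).totalDegree ≤ F.totalDegree := by
  rw [expApply_eq_truncExp_apply]
  exact totalDegree_truncExp_apply_le hT _ F

lemma truncExp_expApply_neg {T : Module.End ℝ (MvPolynomial σ ℝ)}
    (hT : T ∈ degreeLowering σ ℝ) {N : ℕ} {F : MvPolynomial σ ℝ} (hN : F.totalDegree < N) :
    truncExp N T (expApply (-T) F) = F := by
  rw [expApply_eq_truncExp_apply]
  exact truncExp_truncExp_neg_apply (pow_apply_eq_zero_of_totalDegree_lt hT (lt_add_one _)) hN

lemma commute_pderivL (i j : σ) : Commute (pderivL σ i) (pderivL σ j) :=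
  LinearMap.ext fun p => pderiv_pderiv_comm i j p

lemma commute_pderivL_gammaOp (i : σ) : Commute (pderivL σ i) (GammaOp σ P) :=
  .smul_right (.sum_right _ _ _ fun a _ => .sum_right _ _ _ fun b _ =>
    .smul_right ((commute_pderivL i a).mul_right (commute_pderivL i b)) _) _

lemma gammaOp_mem_degreeLowering : GammaOp σ P ∈ degreeLowering σ ℝ :=
  SMulMemClass.smul_mem _ <| sum_mem fun i _ => sum_mem fun j _ =>
    SMulMemClass.smul_mem _ (mul_mem (pderiv_mem_degreeLowering i) (pderiv_mem_degreeLowering j))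

lemma gammaOp_apply (p : MvPolynomial σ ℝ) :
    GammaOp σ P p = (2 : ℝ)⁻¹ • ∑ i, ∑ j, P i j • pderiv i (pderiv j p) := by
  simp [GammaOp, pderivL]

lemma gammaOp'_tmul (u v : MvPolynomial σ ℝ) :
    GammaOp' σ P (u ⊗ₜ v) = ∑ i, ∑ j, P i j • (pderiv i u ⊗ₜ pderiv j v) := by
  simp [GammaOp', pderivL]

lemma gammaOp_mul (hP : ∀ i j, P i j = P j i) (u v : MvPolynomial σ ℝ) :
    GammaOp σ P (u * v) = GammaOp σ P u * v + u * GammaOp σ P v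
      + ∑ i, ∑ j, P i j • (pderiv i u * pderiv j v) := by
  -- the two cross terms of `∂ᵢ∂ⱼ(uv)` agree because `P` is symmetric
  have swap : ∑ i, ∑ j, P i j • (pderiv j u * pderiv i v)
      = ∑ i, ∑ j, P i j • (pderiv i u * pderiv j v) := by
    rw [sum_comm]
    simp_rw [hP]
  simp only [gammaOp_apply, pderiv_mul, map_add, smul_add, sum_add_distrib, swap, sum_mul,
    mul_sum, smul_mul_assoc, mul_smul_comm]
  module

lemma gammaOp_comp_mul' (hP : ∀ i j, P i j = P j i) :
    GammaOp σ P ∘ₗ LinearMap.mul' ℝ (MvPolynomial σ ℝ) = LinearMap.mul' ℝ (MvPolynomial σ ℝ) ∘ₗ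
      (GammaOp' σ P + ((GammaOp σ P).rTensor _ + (GammaOp σ P).lTensor _)) := by
  refine TensorProduct.ext' fun u v => ?_
  simp [gammaOp_mul P hP, gammaOp'_tmul, map_sum]
  ring

lemma commute_gammaOp'_rTensor :
    Commute (GammaOp' σ P) ((GammaOp σ P).rTensor (MvPolynomial σ ℝ)) :=
  .sum_left _ _ _ fun i _ => .sum_left _ _ _ fun _ _ =>
    .smul_left (commute_map (commute_pderivL_gammaOp P i) (Commute.one_right _)) _

lemma commute_gammaOp'_lTensor :
    Commute (GammaOp' σ P) ((GammaOp σ P).lTensor (MvPolynomial σ ℝ)) :=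
  .sum_left _ _ _ fun _ _ => .sum_left _ _ _ fun j _ =>
    .smul_left (commute_map (Commute.one_right _) (commute_pderivL_gammaOp P j)) _

lemma gammaOp'_pow_tmul_eq_zero {k : ℕ} {u v : MvPolynomial σ ℝ}
    (h : u.totalDegree < k ∨ v.totalDegree < k) : (GammaOp' σ P ^ k) (u ⊗ₜ v) = 0 := by
  induction k generalizing u v with
  | zero => simp at h
  | succ k ih =>
    rw [pow_succ, Module.End.mul_apply, gammaOp'_tmul, map_sum]
    refine sum_eq_zero fun i _ => ?_
    rw [map_sum]
    refine sum_eq_zero fun j _ => ?_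
    rcases eq_or_ne (pderiv i u) 0 with hu | hu
    · simp [hu]
    rcases eq_or_ne (pderiv j v) 0 with hv | hv
    · simp [hv]
    have := totalDegree_pderiv_lt i hu
    have := totalDegree_pderiv_lt j hv
    rw [map_smul, ih (by omega), smul_zero]

lemma gammaOp'_pow_rTensor_pow_lTensor_pow_tmul_eq_zero {a b c : ℕ} {x y : MvPolynomial σ ℝ}
    (h : x.totalDegree + y.totalDegree < a + b + c) :
    (GammaOp' σ P ^ a) (((GammaOp σ P).rTensor _ ^ b) (((GammaOp σ P).lTensor _ ^ c) (x ⊗ₜ y)))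
      = 0 := by
  have hΓ := gammaOp_mem_degreeLowering P
  rw [LinearMap.lTensor_pow, LinearMap.rTensor_pow, LinearMap.lTensor_tmul,
    LinearMap.rTensor_tmul]
  rcases pow_apply_eq_zero_or_totalDegree_add_le hΓ b x with hx | hx
  · rw [hx, zero_tmul, map_zero]
  rcases pow_apply_eq_zero_or_totalDegree_add_le hΓ c y with hy | hy
  · rw [hy, tmul_zero, map_zero]
  exact gammaOp'_pow_tmul_eq_zero P (by omega)

end Gamma

/-- No-tadpole expansion of the Euclidean time-ordered product:
`exp(Γ)(exp(−Γ)F · exp(−Γ)G) = M(exp(Γ')(F ⊗ G))`, where `M` is the multiplication map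
and `exp(Γ')(F ⊗ G)` is the (finite) exponential series `Σₙ Γ'ⁿ(F ⊗ G)/n!`, which
terminates since `Γ'` strictly lowers total degree
(`Γ'ⁿ (F ⊗ G) = 0` for `n > totalDegree F + totalDegree G`). -/
theorem eProd_eq_mul_expGamma' (σ : Type*) [Fintype σ] (P : σ → σ → ℝ)
    (hP : ∀ i j, P i j = P j i) (F G : MvPolynomial σ ℝ) :
    expApply (GammaOp σ P) (expApply (-(GammaOp σ P)) F * expApply (-(GammaOp σ P)) G)
      = LinearMap.mul' ℝ (MvPolynomial σ ℝ)
          (∑ n ∈ Finset.range (F.totalDegree + G.totalDegree + 1),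
            ((n.factorial : ℝ)⁻¹) • (GammaOp' σ P ^ n) (F ⊗ₜ[ℝ] G)) := by
  set Γ := GammaOp σ P
  set N := F.totalDegree + G.totalDegree + 1
  have hΓ : Γ ∈ degreeLowering σ ℝ := gammaOp_mem_degreeLowering P
  have hF : truncExp N Γ (expApply (-Γ) F) = F := truncExp_expApply_neg hΓ (by omega)
  have hG : truncExp N Γ (expApply (-Γ) G) = G := truncExp_expApply_neg hΓ (by omega)
  have hx := totalDegree_expApply_le (neg_mem hΓ) F
  have hy := totalDegree_expApply_le (neg_mem hΓ) G
  generalize expApply (-Γ) F = x at hF hx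
  generalize expApply (-Γ) G = y at hG hy
  have hxy : (x * y).totalDegree + 1 ≤ N := by
    have := totalDegree_mul x y
    omega
  calc expApply Γ (x * y) = truncExp N Γ (LinearMap.mul' ℝ _ (x ⊗ₜ y)) := by
        rw [expApply_eq_truncExp_apply, LinearMap.mul'_apply]
        exact (truncExp_apply_eq_of_le
          (pow_apply_eq_zero_of_totalDegree_lt hΓ (lt_add_one _)) hxy).symm
    _ = LinearMap.mul' ℝ _ (truncExp N (GammaOp' σ P + (Γ.rTensor _ + Γ.lTensor _)) (x ⊗ₜ y)) :=
        LinearMap.congr_fun (truncExp_comp (gammaOp_comp_mul' P hP) N) _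
    _ = LinearMap.mul' ℝ _ (truncExp N (GammaOp' σ P) (F ⊗ₜ G)) := by
        rw [truncExp_add_add_apply (commute_gammaOp'_rTensor P) (commute_gammaOp'_lTensor P)
          (commute_map (Commute.one_right Γ) (Commute.one_left Γ))
          fun a b c h => gammaOp'_pow_rTensor_pow_lTensor_pow_tmul_eq_zero P (by omega),
          truncExp_lTensor, truncExp_rTensor, LinearMap.lTensor_tmul, LinearMap.rTensor_tmul,
          hF, hG]
    _ = _ := congrArg _ (truncExp_apply _ _ _)
end

section
/- Let d ≥ 1, k, n ∈ ℕ with n ≤ k. Let f : ℝ^d → ℝ be smooth with compact support and let φ, h : ℝ^d → ℝ be smooth. Then the function g : ℝ → ℝ, g(λ) := ∫_{ℝ^d} (φ(x) + λ·h(x))^k · f(x) dx, satisfies iteratedDeriv n g 0 = (k! / (k−n)!) · ∫_{ℝ^d} (φ(x))^{k−n} · (h(x))^n · f(x) dx. In particular, with the normalization F(φ) = (1/k!) ∫ φ(x)^k f(x) dx of the paper, the n-th functional derivative of F at φ evaluated on h^{⊗n} equals (1/(k−n)!) ∫ φ(x)^{k−n} h(x)^n f(x) dx. -/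
open MeasureTheory Polynomial Finset

lemma iteratedDeriv_polynomial_eval (p : Polynomial ℝ) (n : ℕ) :
    iteratedDeriv n (fun x : ℝ => p.eval x) = fun x => (derivative^[n] p).eval x := by
  induction n generalizing p with
  | zero => simp [iteratedDeriv_zero]
  | succ m ih =>
    rw [iteratedDeriv_succ']
    have : deriv (fun x : ℝ => p.eval x) = fun x => p.derivative.eval x := by
      funext x; exact p.deriv
    rw [this, ih, Function.iterate_succ_apply]

/-- Functional derivatives of the field monomial `F(φ) = (1/k!) ∫ φ(x)^k f(x) dx`:
for `n ≤ k`, the `n`-th derivative at `λ = 0` of `λ ↦ ∫ (φ + λh)^k f` equals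
`(k!/(k−n)!) ∫ φ^{k−n} hⁿ f`. -/
theorem iteratedDeriv_monomial_functional (d k n : ℕ) (hd : 1 ≤ d) (hnk : n ≤ k)
    (f φ h : EuclideanSpace ℝ (Fin d) → ℝ)
    (hf : ContDiff ℝ (⊤ : ℕ∞) f) (hfc : HasCompactSupport f)
    (hφ : ContDiff ℝ (⊤ : ℕ∞) φ) (hh : ContDiff ℝ (⊤ : ℕ∞) h) :
    iteratedDeriv n
        (fun lam : ℝ => ∫ x : EuclideanSpace ℝ (Fin d), (φ x + lam * h x) ^ k * f x) 0
      = (k.factorial : ℝ) / ((k - n).factorial : ℝ) *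
          ∫ x : EuclideanSpace ℝ (Fin d), (φ x) ^ (k - n) * (h x) ^ n * f x := by
  set I : ℕ → ℝ := fun j => ∫ x : EuclideanSpace ℝ (Fin d),
      (φ x) ^ (k - j) * (h x) ^ j * f x with hI
  obtain ⟨c, hc⟩ : ∃ c : ℕ → ℝ, ∀ j, c j = (k.choose j : ℝ) * I j := ⟨_, fun _ => rfl⟩
  set p : Polynomial ℝ := ∑ j ∈ range (k + 1), C (c j) * X ^ j with hp
  have hint : ∀ (g : EuclideanSpace ℝ (Fin d) → ℝ), Continuous g →
      Integrable (fun x => g x * f x) := by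
    intro g hg
    exact (hg.mul hf.continuous).integrable_of_hasCompactSupport (hfc.mul_left)
  have hgp : (fun lam : ℝ => ∫ x : EuclideanSpace ℝ (Fin d), (φ x + lam * h x) ^ k * f x)
      = fun lam => p.eval lam := by
    funext lam
    have hexp : ∀ x : EuclideanSpace ℝ (Fin d), (φ x + lam * h x) ^ k * f x
        = ∑ j ∈ range (k + 1),
            ((k.choose j : ℝ) * lam ^ j) * ((φ x) ^ (k - j) * (h x) ^ j * f x) := by
      intro x
      rw [add_comm (φ x), add_pow, Finset.sum_mul]
      refine Finset.sum_congr rfl fun j _ => ?_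
      rw [mul_pow]; ring
    simp_rw [hexp]
    rw [integral_finset_sum]
    · simp only [integral_const_mul, hp, eval_finset_sum, eval_mul, eval_C, eval_pow, eval_X]
      exact Finset.sum_congr rfl fun j _ => by rw [hc]; ring
    · intro j _
      exact (hint _ ((hφ.continuous.pow _).mul (hh.continuous.pow _))).const_mul _
  rw [hgp, iteratedDeriv_polynomial_eval]
  beta_reduce
  have hcoeff : (derivative^[n] p).eval 0 = (n.factorial : ℝ) * c n := by
    rw [← Polynomial.coeff_zero_eq_eval_zero, Polynomial.coeff_iterate_derivative]
    simp only [zero_add, Nat.descFactorial_self, nsmul_eq_mul]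
    congr 1
    rw [hp, Polynomial.finset_sum_coeff]
    rw [Finset.sum_eq_single n]
    · simp [Polynomial.coeff_C_mul, Polynomial.coeff_X_pow]
    · intro b _ hbn
      simp [Polynomial.coeff_C_mul, Polynomial.coeff_X_pow, Ne.symm hbn]
    · intro hn; exact absurd (Finset.mem_range.mpr (Nat.lt_succ_of_le hnk)) hn
  rw [hcoeff, hc]
  simp only [hI]
  have : (k.factorial : ℝ) = (n.factorial : ℝ) * (k.choose n : ℝ) * ((k - n).factorial : ℝ) := by
    rw [← Nat.choose_mul_factorial_mul_factorial hnk]; push_cast; ring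
  rw [this]
  have h0 : ((k - n).factorial : ℝ) ≠ 0 := Nat.cast_ne_zero.mpr (Nat.factorial_ne_zero _)
  field_simp
end
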